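/- arXiv:1706.09328 — 2 statements merged into one kernel-verified Lean document; each statement's English description precedes it below -/
import Mathlib

section
/- Let R = ℤ[λ_{i,j} : 1 ≤ i ≤ n, 1 ≤ j ≤ N]/(λ_{i,j}²−1), and let f ∈ R have type (a₁,...,aₙ; b), meaning f is a sum of monomials each of type (a₁,...,aₙ; b). If every aᵢ is odd and b < n, then the sum of all evaluations of f under substitutions λ_{i,j} ↦ ±1 (over all sign choices) is zero. -/
/-!
Expanding `f` into monomials and exchanging the two sums, it suffices that every monomial
`∏ λ_v ^ d_v` of `f` has zero sign sum. That sum factors as `∏_v (1 + (-1) ^ d_v)`, so it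
vanishes as soon as one exponent `d_v` is odd. Such an exponent exists by parity: if `d = e + g`
had only even entries, then in each row `i` the odd row sum `Σ_j e (i, j) = a i` forces an odd
`e (i, j)`, hence an odd `g (i, j)`, and `g` would have length at least `n > b`.
-/

/-- Length of a monomial with exponent function `f` on the variables `λ_{i,j}`
(`1 ≤ i ≤ n`, `1 ≤ j ≤ N`): the number of variables appearing in the canonical
squarefree form, i.e. the number of variables with odd exponent. -/
def mlength (n N : ℕ) (f : Fin n × Fin N → ℕ) : ℕ :=
  (Finset.univ.filter fun v => Odd (f v)).card

/-- A monomial with exponent function `d` has type `(a; b)` if `d = e + f` with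
`Σ_j e (i,j) = a i` for each `i`, and `f` of length at most `b`. -/
def MonoType (n N : ℕ) (d : Fin n × Fin N → ℕ) (a : Fin n → ℕ) (b : ℕ) : Prop :=
  ∃ e f : Fin n × Fin N → ℕ, d = e + f ∧
    (∀ i : Fin n, ∑ j : Fin N, e (i, j) = a i) ∧ mlength n N f ≤ b

open Finset

lemma sum_units_pow_eq_zero {k : ℕ} (hk : Odd k) : ∑ u : ℤˣ, (u : ℤ) ^ k = 0 := by
  rw [show (univ : Finset ℤˣ) = {1, -1} by decide]
  simp [hk.neg_one_pow]

lemma sum_units_prod_pow_eq_zero {σ : Type*} [Fintype σ] [DecidableEq σ] (d : σ → ℕ)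
    {v : σ} (hv : Odd (d v)) : ∑ ε : σ → ℤˣ, ∏ w, (ε w : ℤ) ^ d w = 0 := by
  rw [← Fintype.prod_sum fun w (u : ℤˣ) => (u : ℤ) ^ d w]
  exact prod_eq_zero (mem_univ v) (sum_units_pow_eq_zero hv)

lemma MvPolynomial.sum_eval_units_eq_zero {σ : Type*} [Fintype σ] [DecidableEq σ]
    (f : MvPolynomial σ ℤ) (hf : ∀ d ∈ f.support, ∃ v, Odd (d v)) :
    ∑ ε : σ → ℤˣ, eval (fun v => (ε v : ℤ)) f = 0 := by
  simp only [eval_eq']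
  rw [sum_comm]
  refine sum_eq_zero fun d hd => ?_
  obtain ⟨v, hv⟩ := hf d hd
  rw [← mul_sum, sum_units_prod_pow_eq_zero d hv, mul_zero]

lemma Finset.exists_odd_of_odd_sum {ι : Type*} {s : Finset ι} {g : ι → ℕ}
    (h : Odd (∑ j ∈ s, g j)) : ∃ j ∈ s, Odd (g j) := by
  by_contra! hs
  exact Nat.not_odd_iff_even.mpr (even_sum _ fun j hj => Nat.not_odd_iff_even.mp (hs j hj)) h

lemma le_mlength_of_forall_exists_odd {n N : ℕ} {g : Fin n × Fin N → ℕ}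
    (h : ∀ i, ∃ j, Odd (g (i, j))) : n ≤ mlength n N g := by
  choose j hj using h
  unfold mlength
  simpa using card_le_card_of_injOn (s := univ) (fun i => (i, j i))
    (fun i _ => by simpa using hj i) (fun _ _ _ _ hi => (Prod.ext_iff.mp hi).1)

lemma MonoType.exists_odd {n N : ℕ} {d : Fin n × Fin N → ℕ} {a : Fin n → ℕ} {b : ℕ}
    (hd : MonoType n N d a b) (ha : ∀ i, Odd (a i)) (hb : b < n) : ∃ v, Odd (d v) := by
  obtain ⟨e, g, rfl, he, hg⟩ := hd
  by_contra! heven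
  have hrow : ∀ i, ∃ j, Odd (g (i, j)) := fun i => by
    obtain ⟨j, -, hj⟩ := exists_odd_of_odd_sum (he i ▸ ha i)
    refine ⟨j, ?_⟩
    have hsum : Even (e (i, j) + g (i, j)) := Nat.not_odd_iff_even.mp (heven (i, j))
    rw [← Nat.not_even_iff_odd] at hj ⊢
    exact fun hg => hj ((Nat.even_add.mp hsum).mpr hg)
  exact (le_mlength_of_forall_exists_odd hrow).not_gt (hg.trans_lt hb)

/-- if `f ∈ R = ℤ[λ_{i,j}]/(λ_{i,j}²−1)` is a sum of monomials of type
`(a₁,...,aₙ; b)` with every `aᵢ` odd and `b < n`, then the sum of all evaluations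
of `f` under all sign choices `λ_{i,j} ↦ ±1` is zero. -/
theorem stmt5 (n N : ℕ) (a : Fin n → ℕ) (b : ℕ)
    (f : MvPolynomial (Fin n × Fin N) ℤ)
    (hf : ∀ d ∈ f.support, MonoType n N (⇑d) a b)
    (ha : ∀ i, Odd (a i)) (hb : b < n) :
    ∑ ε : Fin n × Fin N → ℤˣ, MvPolynomial.eval (fun v => ((ε v : ℤ))) f = 0 :=
  f.sum_eval_units_eq_zero fun d hd => (hf d hd).exists_odd ha hb
end

section
/- Genus-1 reconstruction identity: in the formal setting where ⟨⟨ψ^{a_1},...,ψ^{a_n}⟩⟩_{g,n} are defined from the trivial (point) theory with descendent insertions T(ψ)=t_1ψ+t_2ψ²+..., one has ⟨⟨1⟩⟩_{1,1}|_{t_0=0} = (1/24)·⟨⟨1,1,1,1⟩⟩_{0,4}|_{t_0=0} / ⟨⟨1,1,1⟩⟩_{0,3}|_{t_0=0}, where ⟨⟨1,1,1⟩⟩_{0,3}|_{t_0=0} = 1/(1−t_1) · (suitable normalization) and the genus-0 correlators are computed by integrals over M̄_{0,n+k}. -/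
/-- Genus-0 ψ-integrals of a point:
`∫_{M̄_{0,m}} ψ^{a_1}···ψ^{a_m} = (m−3)!/(a_1!···a_m!)` when `Σ aᵢ = m−3`, `m ≥ 3`,
and `0` otherwise; insertions recorded as a multiset of exponents. -/
noncomputable def I0 (s : Multiset ℕ) : ℚ :=
  if 3 ≤ Multiset.card s ∧ s.sum + 3 = Multiset.card s then
    (Nat.factorial (Multiset.card s - 3) : ℚ) /
      (s.map fun a => (Nat.factorial a : ℚ)).prod
  else 0

/-- The multiset of descendent exponents (all `≥ 1`, i.e. `t_0 = 0`) encoded by a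
monomial `∏_j t_{j+1}^{d j}` in the variables `t_1, t_2, …`. -/
noncomputable def extM (d : ℕ →₀ ℕ) : Multiset ℕ :=
  d.sum fun j v => Multiset.replicate v (j + 1)

noncomputable def dfact (d : ℕ →₀ ℕ) : ℚ :=
  d.prod fun _ v => (Nat.factorial v : ℚ)

/-- The correlator `⟨⟨ψ^{a_1},…,ψ^{a_n}⟩⟩_{g,n}|_{t_0=0}
  = Σ_{k≥0} (1/k!) ∫_{M̄_{g,n+k}} ψ^{a_1}···ψ^{a_n} ∏ T(ψ)` as a formal power
series in the variables `t_1, t_2, …` (variable index `j ↦ t_{j+1}`), built from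
the ψ-integral data `I : Multiset ℕ → ℚ` and the fixed insertions `s`. -/
noncomputable def corr (I : Multiset ℕ → ℚ) (s : Multiset ℕ) : MvPowerSeries ℕ ℚ :=
  fun d => I (s + extM d) / dfact d

/-!
The weight `Σ j d_j` of the monomial `d` is the excess `Σ (aᵢ - 1)` of its descendent
insertions, so the dimension constraints leave only weight `0` in `⟨⟨1,1,1⟩⟩_{0,3}` and only
weight `1` (the monomials `t_1^k t_2`) in `⟨⟨1,1,1,1⟩⟩_{0,4}` and `⟨⟨1⟩⟩_{1,1}`. The genus-0
formula gives `⟨⟨1,1,1⟩⟩_{0,3} = 1/(1 - t_1)` and `⟨⟨1,1,1,1⟩⟩_{0,4} = t_2/(1 - t_1)^3`;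
string and dilaton give `∫_{M̄_{1,k+2}} ψ² ψ ⋯ ψ = (k+1)!/24`, hence
`⟨⟨1⟩⟩_{1,1} = t_2/(24 (1 - t_1)^2)`. These are proved in the denominator-free forms
`⟨⟨1,1,1⟩⟩_{0,3} (1 - t_1) = 1` and `24 ⟨⟨1⟩⟩_{1,1} = ⟨⟨1,1,1,1⟩⟩_{0,4} (1 - t_1)`, where
multiplying by `1 - t_1` acts on coefficients as a difference in `d_0`.
-/

open Finsupp MvPowerSeries
open scoped Nat

lemma weight_tsub_single_zero (d : ℕ →₀ ℕ) : weight id (d - single 0 1) = weight id d := by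
  by_cases h : d 0 = 0
  · congr 1; ext j; rcases j with _ | j <;> simp [h]
  · simpa using weight_sub_single_add (w := (id : ℕ → ℕ)) h

lemma eq_single_zero_of_weight_eq_zero {d : ℕ →₀ ℕ} (h : weight id d = 0) :
    d = single 0 (d 0) := by
  ext j
  rcases j with _ | j
  · simp
  · have := le_weight (id : ℕ → ℕ) (s := j + 1) (by simp) d
    simp
    omega

lemma eq_single_zero_add_single_one_of_weight_eq_one {d : ℕ →₀ ℕ} (h : weight id d = 1) :
    d = single 0 (d 0) + single 1 1 := by
  have hd : d = single 0 (d 0) + single 1 (d 1) := by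
    ext j
    rcases j with _ | _ | j
    · simp
    · simp
    · suffices d (j + 2) = 0 by simpa
      by_contra hj
      have := le_weight_of_ne_zero' (w := (id : ℕ → ℕ)) hj
      simp at this
      omega
  have h1 : d 1 = 1 := by
    have := congrArg (weight id) hd
    simp [h, weight_single] at this
    omega
  rwa [h1] at hd

theorem MvPowerSeries.coeff_mul_one_sub_X {σ R : Type*} [CommRing R] (f : MvPowerSeries σ R)
    (i : σ) (d : σ →₀ ℕ) :
    coeff d (f * (1 - X i)) = coeff d f - if d i = 0 then 0 else coeff (d - single i 1) f := by
  classical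
  rw [mul_sub, mul_one, map_sub, X, coeff_mul_monomial]
  congr 1
  by_cases h : d i = 0
  · rw [if_neg, if_pos h]; simp [single_le_iff, h]
  · rw [if_pos, if_neg h, mul_one]; simp [single_le_iff]; omega

lemma card_extM (d : ℕ →₀ ℕ) : Multiset.card (extM d) = d.degree := by
  simp [extM, Finsupp.sum, degree_apply]

lemma sum_extM (d : ℕ →₀ ℕ) : (extM d).sum = weight id d + d.degree := by
  simp [extM, Finsupp.sum, Multiset.sum_sum, weight_apply, degree_apply,
    ← Finset.sum_add_distrib, mul_add]

lemma extM_single_zero (k : ℕ) : extM (single 0 k) = Multiset.replicate k 1 := by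
  simp [extM]

lemma dfact_single_zero (k : ℕ) : dfact (single 0 k) = k ! := by
  simp [dfact]

lemma extM_single_zero_add_single_one (k : ℕ) :
    extM (single 0 k + single 1 1) = 2 ::ₘ Multiset.replicate k 1 := by
  rw [extM, sum_add_index' (by simp) (fun _ _ _ => Multiset.replicate_add _ _ _),
    sum_single_index (by simp), sum_single_index (by simp)]
  simp only [zero_add, Multiset.replicate_one, add_comm _ {2}, Multiset.singleton_add]

lemma dfact_single_zero_add_single_one (k : ℕ) : dfact (single 0 k + single 1 1) = k ! := by
  have hdisj : Disjoint (single 0 k).support (single 1 1).support :=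
    Finset.disjoint_of_subset_left support_single_subset (by simp)
  rw [dfact, prod_add_index_of_disjoint hdisj, prod_single_index (by simp),
    prod_single_index (by simp)]
  simp

lemma I0_add_extM_eq_zero {s : Multiset ℕ} {d : ℕ →₀ ℕ}
    (h : s.sum + weight id d + 3 ≠ Multiset.card s) : I0 (s + extM d) = 0 := by
  rw [I0, if_neg]
  rintro ⟨-, h'⟩
  rw [Multiset.sum_add, Multiset.card_add, sum_extM, card_extM] at h'
  omega

lemma coeff_corr_I0_three (d : ℕ →₀ ℕ) :
    coeff d (corr I0 {0, 0, 0}) = if weight id d = 0 then 1 else 0 := by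
  rw [coeff_apply, corr]
  split_ifs with h
  · rw [eq_single_zero_of_weight_eq_zero h, extM_single_zero, dfact_single_zero, I0, if_pos]
    · simp [Multiset.map_replicate, Nat.factorial_ne_zero]
    · simp [Multiset.sum_replicate]
  · rw [I0_add_extM_eq_zero (by simpa using h), zero_div]

lemma coeff_corr_I0_four (d : ℕ →₀ ℕ) :
    coeff d (corr I0 {0, 0, 0, 0}) =
      if weight id d = 1 then ((d 0 : ℚ) + 1) * ((d 0 : ℚ) + 2) / 2 else 0 := by
  rw [coeff_apply, corr]
  split_ifs with h
  · generalize hk : d 0 = k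
    rw [eq_single_zero_add_single_one_of_weight_eq_one h, hk, extM_single_zero_add_single_one,
      dfact_single_zero_add_single_one, I0, if_pos]
    · simp [Multiset.map_replicate, Nat.factorial_succ]
      field_simp
      ring
    · simp [Multiset.sum_replicate]
      omega
  · rw [I0_add_extM_eq_zero (by simpa using h), zero_div]

lemma corr_I0_three_mul_one_sub_X : corr I0 {0, 0, 0} * (1 - X 0) = 1 := by
  classical
  ext d
  rw [coeff_mul_one_sub_X, coeff_corr_I0_three, coeff_corr_I0_three, weight_tsub_single_zero,
    coeff_one]
  by_cases hw : weight id d = 0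
  · by_cases h0 : d 0 = 0
    · have : d = 0 := by rw [eq_single_zero_of_weight_eq_zero hw, h0, single_zero]
      simp [this]
    · have : d ≠ 0 := by rintro rfl; exact h0 rfl
      simp [hw, h0, this]
  · have : d ≠ 0 := by rintro rfl; exact hw (map_zero _)
    simp [hw, this]

section GenusOne

variable {I1 : Multiset ℕ → ℚ}

lemma I1_replicate_one (hbase : I1 {1} = 1 / 24)
    (hdilaton : ∀ s : Multiset ℕ, s ≠ 0 → I1 (1 ::ₘ s) = (Multiset.card s : ℚ) * I1 s)
    (k : ℕ) : I1 (Multiset.replicate (k + 1) 1) = k ! / 24 := by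
  induction k with
  | zero => simpa using hbase
  | succ k ih =>
    rw [Multiset.replicate_succ, hdilaton _ (by simp), Multiset.card_replicate, ih,
      Nat.factorial_succ]
    push_cast
    ring

lemma I1_zero_two_replicate_one (hbase : I1 {1} = 1 / 24)
    (hstring : ∀ s : Multiset ℕ, s ≠ 0 →
      I1 (0 ::ₘ s) = (s.map fun a => if a = 0 then 0 else I1 ((a - 1) ::ₘ s.erase a)).sum)
    (hdilaton : ∀ s : Multiset ℕ, s ≠ 0 → I1 (1 ::ₘ s) = (Multiset.card s : ℚ) * I1 s)
    (k : ℕ) : I1 (0 ::ₘ 2 ::ₘ Multiset.replicate k 1) = (k + 1)! / 24 := by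
  induction k with
  | zero => simp [hstring {2} (by simp), hbase]
  | succ k ih =>
    have herase :
        (2 ::ₘ Multiset.replicate (k + 1) 1).erase 1 = 2 ::ₘ Multiset.replicate k 1 := by
      rw [Multiset.erase_cons_tail _ (by decide), Multiset.replicate_succ, Multiset.erase_cons_head]
    rw [hstring _ (by simp), Multiset.map_cons, Multiset.map_replicate, Multiset.sum_cons,
      Multiset.sum_replicate, if_neg (by decide), if_neg (by decide), Multiset.erase_cons_head,
      herase, ih, ← Multiset.replicate_succ, I1_replicate_one hbase hdilaton]
    push_cast [Nat.factorial_succ]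
    ring

lemma coeff_corr_I1_one
    (hdim : ∀ s : Multiset ℕ, s.sum ≠ Multiset.card s → I1 s = 0)
    (hbase : I1 {1} = 1 / 24)
    (hstring : ∀ s : Multiset ℕ, s ≠ 0 →
      I1 (0 ::ₘ s) = (s.map fun a => if a = 0 then 0 else I1 ((a - 1) ::ₘ s.erase a)).sum)
    (hdilaton : ∀ s : Multiset ℕ, s ≠ 0 → I1 (1 ::ₘ s) = (Multiset.card s : ℚ) * I1 s)
    (d : ℕ →₀ ℕ) :
    coeff d (corr I1 {0}) = if weight id d = 1 then ((d 0 : ℚ) + 1) / 24 else 0 := by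
  rw [coeff_apply, corr]
  split_ifs with h
  · generalize hk : d 0 = k
    rw [eq_single_zero_add_single_one_of_weight_eq_one h, hk, extM_single_zero_add_single_one,
      dfact_single_zero_add_single_one, Multiset.singleton_add,
      I1_zero_two_replicate_one hbase hstring hdilaton, Nat.factorial_succ]
    push_cast
    field_simp
  · rw [hdim, zero_div]
    rw [Multiset.sum_add, Multiset.card_add, sum_extM, card_extM]
    simpa using h

lemma corr_I1_one_eq
    (hdim : ∀ s : Multiset ℕ, s.sum ≠ Multiset.card s → I1 s = 0)
    (hbase : I1 {1} = 1 / 24)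
    (hstring : ∀ s : Multiset ℕ, s ≠ 0 →
      I1 (0 ::ₘ s) = (s.map fun a => if a = 0 then 0 else I1 ((a - 1) ::ₘ s.erase a)).sum)
    (hdilaton : ∀ s : Multiset ℕ, s ≠ 0 → I1 (1 ::ₘ s) = (Multiset.card s : ℚ) * I1 s) :
    24 * corr I1 {0} = corr I0 {0, 0, 0, 0} * (1 - X 0) := by
  ext d
  rw [coeff_mul_one_sub_X, coeff_corr_I0_four, coeff_corr_I0_four, weight_tsub_single_zero,
    ← map_ofNat (C (σ := ℕ) (R := ℚ)) 24, coeff_C_mul,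
    coeff_corr_I1_one hdim hbase hstring hdilaton]
  split_ifs with hw h0
  · rw [h0]; norm_num
  · obtain ⟨n, hn⟩ := Nat.exists_eq_add_one_of_ne_zero h0
    rw [tsub_apply, single_eq_same, hn, add_tsub_cancel_right]
    push_cast
    ring
  · simp
  · simp

end GenusOne

/-- genus-1 reconstruction identity
`⟨⟨1⟩⟩_{1,1}|_{t_0=0} = (1/24)·⟨⟨1,1,1,1⟩⟩_{0,4}|_{t_0=0} / ⟨⟨1,1,1⟩⟩_{0,3}|_{t_0=0}`,
stated denominator-free (the 3-point genus-0 correlator is a unit, with constant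
term 1), where the genus-1 ψ-integrals `I1` satisfy the dimension constraint, the
string and dilaton equations, and `∫_{M̄_{1,1}} ψ = 1/24`. -/
theorem stmt12 (I1 : Multiset ℕ → ℚ)
    (hdim : ∀ s : Multiset ℕ, s.sum ≠ Multiset.card s → I1 s = 0)
    (hbase : I1 {1} = 1 / 24)
    (hstring : ∀ s : Multiset ℕ, s ≠ 0 →
      I1 (0 ::ₘ s) = (s.map fun a => if a = 0 then 0 else I1 ((a - 1) ::ₘ s.erase a)).sum)
    (hdilaton : ∀ s : Multiset ℕ, s ≠ 0 →
      I1 (1 ::ₘ s) = (Multiset.card s : ℚ) * I1 s) :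
    (24 : MvPowerSeries ℕ ℚ) * corr I1 {0} * corr I0 ({0, 0, 0} : Multiset ℕ) =
      corr I0 ({0, 0, 0, 0} : Multiset ℕ) := by
  rw [corr_I1_one_eq hdim hbase hstring hdilaton, mul_assoc, mul_comm (1 - X 0),
    corr_I0_three_mul_one_sub_X, mul_one]
end
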